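/- Let n ≥ 1 and let φ : ℝⁿ → ℝ be smooth. Let B be a C¹ field of symmetric bilinear forms on ℝⁿ (equivalently, a C¹ map from ℝⁿ to symmetric n×n matrices), let Y be a C¹ vector field and h a C¹ function on ℝⁿ. Then at every point: div_φ( h·B(Y,·) ) = B(∇h, Y) + h·(div_φ B)(Y) + (h/2)·⟨B, L_Y δ⟩, where h·B(Y,·) denotes the vector field whose j-th component is h·Σᵢ Bᵢⱼ Yᵢ, (div B)ⱼ = Σᵢ ∂ᵢBᵢⱼ, div_φ B = div B − B(∇φ, ·), (L_Y δ)ᵢⱼ = ∂ᵢYⱼ + ∂ⱼYᵢ is the Lie derivative of the flat metric along Y, and ⟨·,·⟩ is the Frobenius (entrywise) inner product of matrices. -/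

import Mathlib

noncomputable section

open scoped BigOperators

/-- Euclidean space ℝⁿ. -/
abbrev En (n : ℕ) := EuclideanSpace ℝ (Fin n)

/-- The i-th partial derivative of a scalar function at `x`. -/
noncomputable def pd {n : ℕ} (f : En n → ℝ) (i : Fin n) (x : En n) : ℝ :=
  fderiv ℝ f x (EuclideanSpace.single i 1)

/-- The (unweighted) divergence of a vector field on ℝⁿ: div Y = ∑ᵢ ∂ᵢYᵢ. -/
noncomputable def ediv {n : ℕ} (Y : En n → En n) (x : En n) : ℝ :=
  ∑ i, fderiv ℝ Y x (EuclideanSpace.single i 1) i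

/-- Weighted divergence of a vector field: div_φ Y = div Y − ⟨∇φ, Y⟩. -/
noncomputable def divW {n : ℕ} (φ : En n → ℝ) (Y : En n → En n) (x : En n) : ℝ :=
  ediv Y x - (inner ℝ (gradient φ x) (Y x) : ℝ)

/-- Build a vector of ℝⁿ from its coordinates. -/
noncomputable def vec {n : ℕ} (v : Fin n → ℝ) : En n :=
  (EuclideanSpace.equiv (Fin n) ℝ).symm v

-- gradient coordinates
lemma grad_coord {n : ℕ} (f : En n → ℝ) (x : En n) (i : Fin n) :
    gradient f x i = pd f i x := by
  have h1 : (inner ℝ (gradient f x) (EuclideanSpace.single i (1:ℝ)) : ℝ)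
      = fderiv ℝ f x (EuclideanSpace.single i 1) := by
    rw [gradient, InnerProductSpace.toDual_symm_apply]
  rw [pd, ← h1, PiLp.inner_apply]
  simp [EuclideanSpace.single_apply]

lemma inner_eq_sum {n : ℕ} (v w : En n) : (inner ℝ v w : ℝ) = ∑ i, v i * w i := by
  rw [PiLp.inner_apply]; simp [mul_comm]

-- pd rules
lemma pd_mul {n : ℕ} {f g : En n → ℝ} {x : En n} (hf : DifferentiableAt ℝ f x)
    (hg : DifferentiableAt ℝ g x) (i : Fin n) :
    pd (fun y => f y * g y) i x = pd f i x * g x + f x * pd g i x := by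
  simp only [pd, fderiv_fun_mul hf hg, ContinuousLinearMap.add_apply, ContinuousLinearMap.smul_apply, smul_eq_mul]
  ring

lemma pd_sum {n : ℕ} {ι : Type*} (s : Finset ι) {f : ι → En n → ℝ} {x : En n}
    (hf : ∀ k ∈ s, DifferentiableAt ℝ (f k) x) (i : Fin n) :
    pd (fun y => ∑ k ∈ s, f k y) i x = ∑ k ∈ s, pd (f k) i x := by
  simp [pd, fderiv_fun_sum hf]

-- ediv of vec ∘ F
lemma ediv_vec {n : ℕ} (F : Fin n → En n → ℝ) (x : En n)
    (hF : ∀ j, DifferentiableAt ℝ (F j) x) :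
    ediv (fun y => vec (fun j => F j y)) x = ∑ j, pd (F j) j x := by
  have hd : fderiv ℝ (fun y => vec (fun j => F j y)) x
      = ((EuclideanSpace.equiv (Fin n) ℝ).symm : (Fin n → ℝ) →L[ℝ] En n).comp
          (fderiv ℝ (fun y j => F j y) x) := by
    exact (EuclideanSpace.equiv (Fin n) ℝ).symm.comp_fderiv (f := fun y j => F j y) (x := x)
  unfold ediv
  rw [hd, fderiv_pi hF]
  rfl

private lemma alg {n : ℕ} (Bm : Fin n → Fin n → ℝ) (hBs : ∀ i j, Bm i j = Bm j i)
    (DB : Fin n → Fin n → Fin n → ℝ) (hDBs : ∀ i j k, DB i j k = DB j i k)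
    (DY : Fin n → Fin n → ℝ) (gh gφ Yv : Fin n → ℝ) (H : ℝ) :
    ∑ j, (gh j * ∑ i, Bm i j * Yv i
        + H * ∑ i, (DB i j j * Yv i + Bm i j * DY i j))
      - ∑ j, gφ j * (H * ∑ i, Bm i j * Yv i)
    = ∑ i, ∑ j, Bm i j * gh i * Yv j
      + H * ∑ j, ((∑ i, DB i j i) - ∑ i, Bm i j * gφ i) * Yv j
      + H / 2 * ∑ i, ∑ j, Bm i j * (DY j i + DY i j) := by
  have E1 : ∑ j, gh j * ∑ i, Bm i j * Yv i = ∑ i, ∑ j, Bm i j * gh i * Yv j := by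
    simp only [Finset.mul_sum]
    exact Finset.sum_congr rfl fun j _ => Finset.sum_congr rfl fun i _ => by
      rw [hBs i j]; ring
  have E2 : ∑ j, ∑ i, (DB i j j * Yv i : ℝ) = ∑ j, (∑ i, DB i j i) * Yv j := by
    rw [Finset.sum_comm]
    exact Finset.sum_congr rfl fun j _ => by
      rw [Finset.sum_mul]
      exact Finset.sum_congr rfl fun i _ => by rw [hDBs]
  have E4 : ∑ j, ∑ i, (gφ j * (Bm i j * Yv i) : ℝ) = ∑ j, (∑ i, Bm i j * gφ i) * Yv j := by
    rw [Finset.sum_comm]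
    exact Finset.sum_congr rfl fun j _ => by
      rw [Finset.sum_mul]
      exact Finset.sum_congr rfl fun i _ => by rw [hBs i j]; ring
  have E3 : ∑ i, ∑ j, (Bm i j * (DY j i + DY i j) : ℝ) = 2 * ∑ j, ∑ i, Bm i j * DY i j := by
    have h1 : ∑ i, ∑ j, (Bm i j * DY j i : ℝ) = ∑ j, ∑ i, Bm i j * DY i j :=
      Finset.sum_congr rfl fun i _ => Finset.sum_congr rfl fun j _ => by rw [hBs i j]
    have h2 : ∑ i, ∑ j, (Bm i j * DY i j : ℝ) = ∑ j, ∑ i, Bm i j * DY i j :=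
      Finset.sum_comm

    simp only [mul_add, Finset.sum_add_distrib, h1, h2]; ring
  calc ∑ j, (gh j * ∑ i, Bm i j * Yv i
        + H * ∑ i, (DB i j j * Yv i + Bm i j * DY i j))
      - ∑ j, gφ j * (H * ∑ i, Bm i j * Yv i)
      = (∑ j, gh j * ∑ i, Bm i j * Yv i)
        + H * (∑ j, ∑ i, DB i j j * Yv i)
        + H * (∑ j, ∑ i, Bm i j * DY i j)
        - H * (∑ j, ∑ i, gφ j * (Bm i j * Yv i)) := by
        simp only [Finset.sum_add_distrib, Finset.mul_sum, mul_add]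
        ring_nf
    _ = _ := by
        rw [E1, E2, E4, E3]
        simp only [sub_mul, Finset.sum_sub_distrib]
        ring

/-- the weighted divergence identity for a C¹ field `B` of symmetric
bilinear forms, a C¹ vector field `Y` and a C¹ function `h`:
div_φ( h·B(Y,·) ) = B(∇h, Y) + h·(div_φ B)(Y) + (h/2)·⟨B, L_Y δ⟩, where
(div_φ B)ⱼ = ∑ᵢ ∂ᵢBᵢⱼ − ∑ᵢ Bᵢⱼ (∇φ)ᵢ and (L_Y δ)ᵢⱼ = ∂ᵢYⱼ + ∂ⱼYᵢ. -/
theorem stmt4 (n : ℕ) (hn : 1 ≤ n) (φ : En n → ℝ) (hφ : ContDiff ℝ (⊤ : ℕ∞) φ)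
    (B : En n → Matrix (Fin n) (Fin n) ℝ)
    (hB : ∀ i j, ContDiff ℝ 1 (fun x => B x i j))
    (hBsymm : ∀ x i j, B x i j = B x j i)
    (Y : En n → En n) (hY : ContDiff ℝ 1 Y)
    (h : En n → ℝ) (hh : ContDiff ℝ 1 h) (x : En n) :
    divW φ (fun y => vec (fun j => h y * ∑ i, B y i j * Y y i)) x
      = (∑ i, ∑ j, B x i j * gradient h x i * Y x j)
        + h x * (∑ j, ((∑ i, pd (fun y => B y i j) i x)
            - ∑ i, B x i j * gradient φ x i) * Y x j)
        + (h x / 2) * ∑ i, ∑ j,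
            B x i j * (pd (fun y => Y y j) i x + pd (fun y => Y y i) j x) := by
  -- differentiability
  have hYc : ∀ i, DifferentiableAt ℝ (fun y => Y y i) x := by
    intro i
    exact ((EuclideanSpace.proj i : En n →L[ℝ] ℝ)).differentiableAt.comp x
      (hY.differentiable one_ne_zero x)
  have hBd : ∀ i j, DifferentiableAt ℝ (fun y => B y i j) x :=
    fun i j => ((hB i j).differentiable one_ne_zero) x
  have hhd : DifferentiableAt ℝ h x := hh.differentiable one_ne_zero x
  have hφd : DifferentiableAt ℝ φ x := (hφ.differentiable (by simp)) x
  have hSd : ∀ j, DifferentiableAt ℝ (fun y => ∑ i, B y i j * Y y i) x := by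
    intro j
    exact DifferentiableAt.fun_sum (fun i _ => (hBd i j).mul (hYc i))
  have hFd : ∀ j, DifferentiableAt ℝ (fun y => h y * ∑ i, B y i j * Y y i) x :=
    fun j => hhd.mul (hSd j)
  -- expand divW
  rw [divW, ediv_vec _ _ hFd]
  -- expand each pd
  have hpd : ∀ j, pd (fun y => h y * ∑ i, B y i j * Y y i) j x
      = pd h j x * (∑ i, B x i j * Y x i)
        + h x * ∑ i, (pd (fun y => B y i j) j x * Y x i + B x i j * pd (fun y => Y y i) j x) := by
    intro j
    have e : ∀ i : Fin n, pd (fun y => B y i j * Y y i) j x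
        = pd (fun y => B y i j) j x * Y x i + B x i j * pd (fun y => Y y i) j x :=
      fun i => pd_mul (hBd i j) (hYc i) j
    rw [pd_mul hhd (hSd j), pd_sum Finset.univ (f := fun i y => B y i j * Y y i) (fun i _ => (hBd i j).mul (hYc i))]
    simp only [e]
  simp only [hpd]
  -- inner term: vec application is identity
  have hvec : ∀ (v : Fin n → ℝ) (i : Fin n), vec v i = v i := fun v i => rfl
  rw [inner_eq_sum]
  simp only [hvec, grad_coord]
  -- now pure algebra
  exact alg (fun i j => B x i j) (fun i j => hBsymm x i j)
    (fun i j k => pd (fun y => B y i j) k x)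
    (fun i j k => by
      show pd (fun y => B y i j) k x = pd (fun y => B y j i) k x
      rw [show (fun y => B y i j) = (fun y => B y j i) from
        funext fun y => hBsymm y i j])
    (fun i j => pd (fun y => Y y i) j x)
    (fun j => pd h j x) (fun j => pd φ j x) (fun i => Y x i) (h x)
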